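/- Let F = ⟨A, R, W, S⟩ be a semiring-based weighted argumentation framework over an absorptive c-semiring S, let Z ⊆ A be a w-admissible extension of F, and let B = A \ (Z ∪ R⁺(Z)). If T ⊆ B is a w-stable extension of the restricted framework F|_B and every argument of T is w-defended by Z ∪ T in F, then Z ∪ T is a w-stable extension of F. -/

import Mathlib

/-!
Under absorptivity `⊤ = 1` is the greatest element and products only decrease, so `W(Z, t) = ⊤`
forces `W(t, Z) = ⊤` whenever `Z` defends against `t`: since no member of `Z` attacks `B`, no
member of `T` attacks `Z`, and `Z ∪ T` is conflict-free. An attacker `a` of some `z ∈ Z` either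
attacks `T`, and is then answered by the defense of that member of `T`, or it does not, and then
`W(Z ∪ T, a) ≤ W(Z, a) ≤ W(a, Z) = W(a, Z ∪ T)`. Arguments outside `B` are attacked by `Z`,
those in `B \ T` by `T`.
-/

open Finset

variable {A : Type*} [Fintype A] [DecidableEq A] {S : Type*} [CommSemiring S]

/-- The order induced by the idempotent addition of a c-semiring: `a ≤ₛ b` iff `a + b = b`. -/
def sLE (a b : S) : Prop := a + b = b

/-- The attack weight `W(B, D)` from a set of arguments `B` to a set `D`:
the semiring product of all pairwise weights. -/
def Wsets (W : A → A → S) (B D : Finset A) : S := ∏ b ∈ B, ∏ d ∈ D, W b d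

/-- `B` is w-conflict-free iff `W(B, B) = ⊤` (here `⊤` is the multiplicative unit `1`). -/
def wConflictFree (W : A → A → S) (B : Finset A) : Prop := Wsets W B B = 1

/-- Within the framework whose set of arguments is `U`, the set `B` w-defends `b`:
for every attacker `a ∈ U` of `b` (i.e. `W a b ≠ ⊤`), `W(a, B ∪ {b}) ≥ₛ W(B, a)`. -/
def wDefendsIn (W : A → A → S) (U B : Finset A) (b : A) : Prop :=
  ∀ a ∈ U, W a b ≠ 1 → sLE (Wsets W B {a}) (Wsets W {a} (insert b B))

/-- `B` is w-admissible in the framework with argument set `U`: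
`B ⊆ U`, `B` is w-conflict-free, and `B` w-defends each of its members. -/
def wAdmissibleIn (W : A → A → S) (U B : Finset A) : Prop :=
  B ⊆ U ∧ wConflictFree W B ∧ ∀ b ∈ B, wDefendsIn W U B b

/-- `B` is a w-stable extension: w-admissible and every argument of `U` outside `B`
is attacked by some member of `B`. -/
def wStableIn (W : A → A → S) (U B : Finset A) : Prop :=
  wAdmissibleIn W U B ∧ ∀ a ∈ U, a ∉ B → ∃ b ∈ B, W b a ≠ 1

/-- `B` is a w-complete extension: w-admissible and it contains every argument `b`
such that `B ∪ {b}` is w-admissible. -/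
def wCompleteIn (W : A → A → S) (U B : Finset A) : Prop :=
  wAdmissibleIn W U B ∧ ∀ b ∈ U, wAdmissibleIn W U (insert b B) → b ∈ B

/-- `B` is a w-preferred extension: a ⊆-maximal w-admissible subset. -/
def wPreferredIn (W : A → A → S) (U B : Finset A) : Prop :=
  wAdmissibleIn W U B ∧ ∀ C : Finset A, wAdmissibleIn W U C → B ⊆ C → C = B

lemma sLE_trans {a b c : S} (hab : sLE a b) (hbc : sLE b c) : sLE a c := by
  unfold sLE at *
  rw [← hbc, ← add_assoc, hab]

lemma mul_sLE_left (habs : ∀ s t : S, s + s * t = s) (a b : S) : sLE (a * b) a := by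
  rw [sLE, add_comm]
  exact habs a b

lemma eq_one_of_one_sLE (habs : ∀ s t : S, s + s * t = s) {a : S} (h : sLE 1 a) : a = 1 :=
  h.symm.trans (by simpa using habs 1 a)

section Weights

variable {α : Type*} (W : α → α → S)

lemma Wsets_singleton_left (a : α) (D : Finset α) : Wsets W {a} D = ∏ d ∈ D, W a d :=
  prod_singleton ..

lemma Wsets_eq_one {B D : Finset α} (h : ∀ b ∈ B, ∀ d ∈ D, W b d = 1) : Wsets W B D = 1 :=
  prod_eq_one fun b hb => prod_eq_one (h b hb)

lemma Wsets_union_left [DecidableEq α] {X Y : Finset α} (D : Finset α) (h : Disjoint X Y) :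
    Wsets W (X ∪ Y) D = Wsets W X D * Wsets W Y D :=
  prod_union h

lemma Wsets_union_right [DecidableEq α] (D : Finset α) {X Y : Finset α} (h : Disjoint X Y) :
    Wsets W D (X ∪ Y) = Wsets W D X * Wsets W D Y := by
  rw [Wsets, Wsets, Wsets, ← prod_mul_distrib]
  exact prod_congr rfl fun b _ => prod_union h

end Weights

section Extensions

variable {α : Type*} [DecidableEq α] {W : α → α → S} {U Z T : Finset α}

lemma wConflictFree.union (hZ : wConflictFree W Z) (hT : wConflictFree W T) (hdisj : Disjoint Z T)
    (hZT : Wsets W Z T = 1) (hTZ : Wsets W T Z = 1) : wConflictFree W (Z ∪ T) := by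
  rw [wConflictFree] at hZ hT ⊢
  rw [Wsets_union_left W _ hdisj, Wsets_union_right W _ hdisj, Wsets_union_right W _ hdisj,
    hZ, hT, hZT, hTZ]
  ring

lemma wAdmissibleIn.Wsets_singleton_left_eq_one (habs : ∀ s t : S, s + s * t = s)
    (hZ : wAdmissibleIn W U Z) {a : α} (ha : a ∈ U) (hunattacked : ∀ z ∈ Z, W z a = 1) :
    Wsets W {a} Z = 1 := by
  by_cases hattacks : ∃ z ∈ Z, W a z ≠ 1
  · obtain ⟨z, hz, hza⟩ := hattacks
    have hdefense := hZ.2.2 z hz a ha hza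
    rw [insert_eq_of_mem hz, Wsets_eq_one W fun z hz b hb => by
      rw [mem_singleton.mp hb]; exact hunattacked z hz] at hdefense
    exact eq_one_of_one_sLE habs hdefense
  · push Not at hattacks
    rw [Wsets_singleton_left]
    exact prod_eq_one hattacks

lemma wDefendsIn.union (habs : ∀ s t : S, s + s * t = s) (hdisj : Disjoint Z T) {z : α}
    (hz : z ∈ Z) (hZz : wDefendsIn W U Z z) (hT : ∀ t ∈ T, wDefendsIn W U (Z ∪ T) t) :
    wDefendsIn W U (Z ∪ T) z := by
  intro a ha haz
  rw [insert_eq_of_mem (mem_union_left T hz)]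
  by_cases hattacks : ∃ t ∈ T, W a t ≠ 1
  · obtain ⟨t, ht, hat⟩ := hattacks
    simpa only [insert_eq_of_mem (mem_union_right Z ht)] using hT t ht a ha hat
  · push Not at hattacks
    have hZa := hZz a ha haz
    rw [insert_eq_of_mem hz] at hZa
    have haT : Wsets W {a} T = 1 := by
      rw [Wsets_singleton_left]
      exact prod_eq_one hattacks
    rw [Wsets_union_left W _ hdisj, Wsets_union_right W _ hdisj, haT, mul_one]
    exact sLE_trans (mul_sLE_left habs _ _) hZa

end Extensions

theorem union_stable_general (W : A → A → S)
    (habs : ∀ s t : S, s + s * t = s)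
    (Z : Finset A) (hZ : wAdmissibleIn W Finset.univ Z)
    (B : Finset A) (hB : ∀ a : A, a ∈ B ↔ a ∉ Z ∧ ∀ i ∈ Z, W i a = 1)
    (T : Finset A)
    (hTB : wStableIn W B T)
    (hdef : ∀ t ∈ T, wDefendsIn W Finset.univ (Z ∪ T) t) :
    wStableIn W Finset.univ (Z ∪ T) := by
  obtain ⟨⟨hTsub, hTcf, -⟩, hTcovers⟩ := hTB
  have hdisj : Disjoint Z T := disjoint_right.mpr fun _ ht => ((hB _).mp (hTsub ht)).1
  have hZT : Wsets W Z T = 1 := Wsets_eq_one W fun z hz t ht => ((hB t).mp (hTsub ht)).2 z hz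
  have hTZ : Wsets W T Z = 1 := prod_eq_one fun t ht => by
    rw [← Wsets_singleton_left]
    exact hZ.Wsets_singleton_left_eq_one habs (mem_univ t) ((hB t).mp (hTsub ht)).2
  refine ⟨⟨subset_univ _, hZ.2.1.union hTcf hdisj hZT hTZ, fun b hb => ?_⟩, fun a _ ha => ?_⟩
  · rcases mem_union.mp hb with hbZ | hbT
    · exact (hZ.2.2 b hbZ).union habs hdisj hbZ hdef
    · exact hdef b hbT
  · rw [mem_union, not_or] at ha
    by_cases haB : a ∈ B
    · obtain ⟨t, ht, hta⟩ := hTcovers a haB ha.2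
      exact ⟨t, mem_union_right Z ht, hta⟩
    · obtain ⟨z, hz, hza⟩ : ∃ z ∈ Z, W z a ≠ 1 := by
        by_contra! h
        exact haB ((hB a).mpr ⟨ha.1, h⟩)
      exact ⟨z, mem_union_left T hz, hza⟩

/-- Division/union theorem: if Z is w-admissible in F, B = A \ (Z ∪ R⁺(Z)) is the
remaining sub-framework's argument set, T ⊆ B is a w-stable extension of F|_B, and
every argument of T is w-defended by Z ∪ T in F, then Z ∪ T is a w-stable extension
of F.  (Here a ∈ B iff a ∉ Z and no member of Z attacks a, i.e. W(i,a) = ⊤ for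
all i ∈ Z.) -/
theorem union_stable (W : A → A → S)
    (hadd : ∀ s : S, s + s = s) (habs : ∀ s t : S, s + s * t = s)
    (Z : Finset A) (hZ : wAdmissibleIn W Finset.univ Z)
    (B : Finset A) (hB : ∀ a : A, a ∈ B ↔ a ∉ Z ∧ ∀ i ∈ Z, W i a = 1)
    (T : Finset A) (hT : T ⊆ B)
    (hTB : wStableIn W B T)
    (hdef : ∀ t ∈ T, wDefendsIn W Finset.univ (Z ∪ T) t) :
    wStableIn W Finset.univ (Z ∪ T) :=
  union_stable_general W habs Z hZ B hB T hTB hdef
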